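/- Let α ∈ (−π, π) with α ≠ 0, let β = π, let M be an n×n non-diagonal Hermitian unitary modularly permutation-symmetric complex matrix with |M_{jj}| = r, |M_{jℓ}| = t > 0 (j ≠ ℓ), d = r/t, and let U = exp(i(α+β)/2)·( cos((α−β)/2)·I + i·sin((α−β)/2)·M ). Then for every real k > 0 and all indices j ≠ ℓ, the ratio ρ(k) = |S(k)_{jj}|² / |S(k)_{jℓ}|² satisfies ρ(k) = d² + (d² + n − 1)·tan²(α/2)·(1/k²) (generalized δ-coupling). -/

import Mathlib

/-!
Since `M² = 1`, the matrix `U` is `e^{iα} P₊ + e^{iβ} P₋` with spectral projections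
`P± = (1 ± M) / 2`, and `S(k)` acts on `P±` by the scalar `((k+1)z + (k-1)) / ((k-1)z + (k+1))`
at `z = e^{iα}, e^{iβ}`. For `β = π` the second scalar is `-1`, and `S(k)` turns out to be a
nonzero multiple of `i tan(α/2) • 1 + k • M`. As `M` is Hermitian, `M j j` is real of modulus `r`,
so the ratio is `(k² r² + tan²(α/2)) / (k² t²)`; unitarity of `M` gives `r² + (n - 1) t² = 1`,
i.e. `1 / t² = d² + n - 1`.
-/

open Matrix Real

section Involution

variable {K A : Type*} [CommRing K] [Ring A] [Algebra K A] {M : A}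

theorem smul_one_add_smul_mul_smul_one_add_smul (hM : M * M = 1) (x y u v : K) :
    (x • (1 : A) + y • M) * (u • 1 + v • M) = (x * u + y * v) • 1 + (x * v + y * u) • M := by
  simp only [add_mul, mul_add, smul_mul_smul_comm, one_mul, mul_one, hM]
  module

end Involution

section Scattering

variable {K n : Type*} [Field K] [Fintype n] [DecidableEq n]

theorem Matrix.inv_smul_one_add_smul {M : Matrix n n K} (hM : M * M = 1) {x y : K}
    (h : x ^ 2 - y ^ 2 ≠ 0) :
    (x • (1 : Matrix n n K) + y • M)⁻¹ = (x ^ 2 - y ^ 2)⁻¹ • (x • 1 + (-y) • M) := by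
  refine Matrix.inv_eq_right_inv ?_
  rw [Matrix.mul_smul, smul_one_add_smul_mul_smul_one_add_smul hM,
    show x * x + y * -y = x ^ 2 - y ^ 2 by ring, show x * -y + y * x = 0 by ring, zero_smul,
    add_zero, smul_smul, inv_mul_cancel₀ h, one_smul]

noncomputable def scatteringMatrix (U : Matrix n n K) (k : K) : Matrix n n K :=
  ((k - 1) • U + (k + 1) • 1)⁻¹ * ((k + 1) • U + (k - 1) • 1)

theorem scatteringMatrix_half_smul_one_add_half_smul {M : Matrix n n K} (hM : M * M = 1)
    {ω k : K} (h2 : (2 : K) ≠ 0) (hD : (k - 1) * ω + (k + 1) ≠ 0) :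
    scatteringMatrix (((ω - 1) / 2) • 1 + ((ω + 1) / 2) • M) k =
      ((k - 1) * ω + (k + 1))⁻¹ • ((ω - 1) • 1 + (k * (ω + 1)) • M) := by
  set x := (k - 1) * ((ω - 1) / 2) + (k + 1)
  set y := (k - 1) * ((ω + 1) / 2)
  have hA : (k - 1) • (((ω - 1) / 2) • 1 + ((ω + 1) / 2) • M) + (k + 1) • (1 : Matrix n n K) =
      x • 1 + y • M := by module
  have hB : (k + 1) • (((ω - 1) / 2) • 1 + ((ω + 1) / 2) • M) + (k - 1) • (1 : Matrix n n K) =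
      ((k + 1) * ((ω - 1) / 2) + (k - 1)) • 1 + ((k + 1) * ((ω + 1) / 2)) • M := by module
  have hΔ : x ^ 2 - y ^ 2 = 2 * ((k - 1) * ω + (k + 1)) := by
    simp only [x, y]
    field_simp
    ring
  rw [scatteringMatrix, hA, hB, Matrix.inv_smul_one_add_smul hM (hΔ ▸ mul_ne_zero h2 hD),
    Matrix.smul_mul, smul_one_add_smul_mul_smul_one_add_smul hM, hΔ, smul_add, smul_add,
    smul_smul, smul_smul, smul_smul, smul_smul]
  congr 2
  · simp only [x, y]
    field_simp
    ring
  · simp only [x, y]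
    field_simp
    ring

end Scattering

theorem Matrix.norm_sq_div_norm_sq_smul_smul_one_add_smul {K n : Type*} [NormedField K]
    [DecidableEq n] (M : Matrix n n K) {c : K} (hc : c ≠ 0) (z w : K) {j l : n} (hjl : j ≠ l) :
    ‖(c • (z • 1 + w • M)) j j‖ ^ 2 / ‖(c • (z • 1 + w • M)) j l‖ ^ 2 =
      ‖z + w * M j j‖ ^ 2 / ‖w * M j l‖ ^ 2 := by
  simp only [smul_apply, add_apply, one_apply_eq, one_apply_ne hjl, smul_eq_mul, mul_one,
    mul_zero, zero_add, norm_mul, mul_pow]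
  exact mul_div_mul_left _ _ (by positivity)

section Unitary

variable {𝕜 n : Type*} [RCLike 𝕜] [Fintype n] [DecidableEq n] {U : Matrix n n 𝕜}

theorem Matrix.sum_norm_sq_row_of_mem_unitaryGroup (hU : U ∈ unitaryGroup n 𝕜) (i : n) :
    ∑ j, ‖U i j‖ ^ 2 = 1 := by
  have hii : (U * Uᴴ) i i = (∑ j, ‖U i j‖ ^ 2 : ℝ) := by
    simp only [Matrix.mul_apply, Matrix.conjTranspose_apply, ← starRingEnd_apply,
      RCLike.mul_conj]
    norm_cast
  rw [← Matrix.star_eq_conjTranspose, Unitary.mul_star_self_of_mem hU, one_apply_eq] at hii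
  exact_mod_cast hii.symm

theorem sq_add_card_sub_one_mul_sq_of_mem_unitaryGroup (hU : U ∈ unitaryGroup n 𝕜) {r t : ℝ}
    (hr : ∀ j, ‖U j j‖ = r) (ht : ∀ j l, j ≠ l → ‖U j l‖ = t) (i : n) :
    r ^ 2 + (Fintype.card n - 1) * t ^ 2 = 1 := by
  have hrow := Matrix.sum_norm_sq_row_of_mem_unitaryGroup hU i
  rwa [← Finset.add_sum_erase _ _ (Finset.mem_univ i), hr,
    Finset.sum_congr rfl fun j hj => by rw [ht i j (Finset.ne_of_mem_erase hj).symm],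
    Finset.sum_const, Finset.card_erase_of_mem (Finset.mem_univ i), Finset.card_univ,
    nsmul_eq_mul, Nat.cast_sub (Fintype.card_pos_iff.mpr ⟨i⟩), Nat.cast_one] at hrow

end Unitary

theorem sub_one_mul_add_add_one_ne_zero {k : ℝ} (hk : 0 < k) {z : ℂ} (hz : ‖z‖ = 1) :
    ((k : ℂ) - 1) * z + (k + 1) ≠ 0 := by
  intro h
  have hnorm := congrArg norm (eq_neg_of_add_eq_zero_right h)
  rw [norm_neg, norm_mul, hz, mul_one, ← Complex.ofReal_one, ← Complex.ofReal_add,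
    ← Complex.ofReal_sub, Complex.norm_real, Complex.norm_real, Real.norm_eq_abs,
    Real.norm_eq_abs, abs_of_pos (by linarith)] at hnorm
  cases abs_cases (k - 1) <;> linarith

theorem cos_add_I_mul_sin (θ : ℝ) :
    (Real.cos θ : ℂ) + Complex.I * (Real.sin θ : ℂ) = Complex.exp (Complex.I * θ) := by
  rw [Complex.ofReal_cos, Complex.ofReal_sin, mul_comm Complex.I (Complex.sin _),
    Complex.cos_add_sin_I, mul_comm]

theorem exp_mul_I_sub_one {α : ℝ} (hα : Real.cos (α / 2) ≠ 0) :
    Complex.exp (Complex.I * α) - 1 =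
      Complex.I * (Real.tan (α / 2) : ℂ) * (Complex.exp (Complex.I * α) + 1) := by
  rw [Real.tan_eq_sin_div_cos, Complex.ofReal_div]
  set c : ℂ := (Real.cos (α / 2) : ℂ)
  set s : ℂ := (Real.sin (α / 2) : ℂ)
  have hexp : Complex.exp (Complex.I * α) = (c + Complex.I * s) ^ 2 := by
    rw [cos_add_I_mul_sin, ← Complex.exp_nat_mul]
    congr 1
    push_cast
    ring
  have hc : c ≠ 0 := Complex.ofReal_ne_zero.mpr hα
  have hsc : s ^ 2 + c ^ 2 = 1 := by simp only [c, s]; exact_mod_cast Real.sin_sq_add_cos_sq _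
  have hplus : (c + Complex.I * s) ^ 2 + 1 = 2 * c * (c + Complex.I * s) := by
    linear_combination s ^ 2 * Complex.I_sq - hsc
  have hminus : (c + Complex.I * s) ^ 2 - 1 = 2 * Complex.I * s * (c + Complex.I * s) := by
    linear_combination hsc - s ^ 2 * Complex.I_sq
  rw [hexp, hplus, hminus]
  field_simp

theorem exp_mul_I_add_one_ne_zero {α : ℝ} (hα : Real.cos (α / 2) ≠ 0) :
    Complex.exp (Complex.I * α) + 1 ≠ 0 := by
  intro h
  have h' := exp_mul_I_sub_one hα
  rw [h, mul_zero, sub_eq_zero] at h'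
  rw [h'] at h
  norm_num at h

section Coupling

variable {n : Type*} [DecidableEq n]

noncomputable def couplingMatrix (α β : ℝ) (M : Matrix n n ℂ) : Matrix n n ℂ :=
  Complex.exp (Complex.I * ((α + β) / 2)) •
    ((Real.cos ((α - β) / 2) : ℂ) • 1 + (Complex.I * (Real.sin ((α - β) / 2) : ℂ)) • M)

theorem couplingMatrix_eq (α β : ℝ) (M : Matrix n n ℂ) :
    couplingMatrix α β M =
      ((Complex.exp (Complex.I * α) + Complex.exp (Complex.I * β)) / 2) • 1 +
        ((Complex.exp (Complex.I * α) - Complex.exp (Complex.I * β)) / 2) • M := by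
  have hα := cos_add_I_mul_sin ((α - β) / 2)
  have hβ := cos_add_I_mul_sin (-((α - β) / 2))
  rw [Real.cos_neg, Real.sin_neg, Complex.ofReal_neg, mul_neg, ← sub_eq_add_neg] at hβ
  have hα' : Complex.exp (Complex.I * α) =
      Complex.exp (Complex.I * ((α + β) / 2)) * Complex.exp (Complex.I * ↑((α - β) / 2)) := by
    rw [← Complex.exp_add]; congr 1; push_cast; ring
  have hβ' : Complex.exp (Complex.I * β) =
      Complex.exp (Complex.I * ((α + β) / 2)) * Complex.exp (Complex.I * ↑(-((α - β) / 2))) := by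
    rw [← Complex.exp_add]; congr 1; push_cast; ring
  rw [couplingMatrix, hα', hβ', ← hα, ← hβ]
  module

theorem exists_scatteringMatrix_couplingMatrix_pi_eq_smul [Fintype n] {M : Matrix n n ℂ} (hM : M * M = 1)
    {α k : ℝ} (hα : Real.cos (α / 2) ≠ 0) (hk : 0 < k) :
    ∃ c : ℂ, c ≠ 0 ∧ scatteringMatrix (couplingMatrix α π M) k =
      c • ((Complex.I * Real.tan (α / 2)) • 1 + (k : ℂ) • M) := by
  set ω := Complex.exp (Complex.I * α) with hω
  have hD : ((k : ℂ) - 1) * ω + (k + 1) ≠ 0 :=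
    sub_one_mul_add_add_one_ne_zero hk (by rw [hω, mul_comm]; exact Complex.norm_exp_ofReal_mul_I α)
  refine ⟨((k - 1) * ω + (k + 1))⁻¹ * (ω + 1),
    mul_ne_zero (inv_ne_zero hD) (exp_mul_I_add_one_ne_zero hα), ?_⟩
  rw [couplingMatrix_eq, mul_comm Complex.I (π : ℂ), Complex.exp_pi_mul_I, ← sub_eq_add_neg,
    sub_neg_eq_add, scatteringMatrix_half_smul_one_add_half_smul hM two_ne_zero hD,
    exp_mul_I_sub_one hα]
  module

end Coupling

theorem stmt_16_general (n : ℕ) (α β : ℝ)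
    (hα : α ∈ Set.Ioo (-π) π) (hβ : β = π)
    (M : Matrix (Fin n) (Fin n) ℂ)
    (hM : M.IsHermitian) (hMu : M ∈ Matrix.unitaryGroup (Fin n) ℂ)
    (r t : ℝ) (ht0 : 0 < t)
    (hr : ∀ j, norm (M j j) = r)
    (ht : ∀ j l, j ≠ l → norm (M j l) = t)
    (d : ℝ) (hd : d = r / t)
    (U : Matrix (Fin n) (Fin n) ℂ)
    (hU : U = Complex.exp (Complex.I * ((α + β) / 2)) •
        ((Real.cos ((α - β) / 2) : ℂ) • (1 : Matrix (Fin n) (Fin n) ℂ) +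
          (Complex.I * (Real.sin ((α - β) / 2) : ℂ)) • M)) :
    ∀ k : ℝ, 0 < k → ∀ j l : Fin n, j ≠ l →
      norm (((((k : ℂ) - 1) • U + ((k : ℂ) + 1) • (1 : Matrix (Fin n) (Fin n) ℂ))⁻¹ *
            (((k : ℂ) + 1) • U + ((k : ℂ) - 1) • (1 : Matrix (Fin n) (Fin n) ℂ))) j j) ^ 2 /
          norm (((((k : ℂ) - 1) • U + ((k : ℂ) + 1) • (1 : Matrix (Fin n) (Fin n) ℂ))⁻¹ *
            (((k : ℂ) + 1) • U + ((k : ℂ) - 1) • (1 : Matrix (Fin n) (Fin n) ℂ))) j l) ^ 2 =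
        d ^ 2 + (d ^ 2 + n - 1) * Real.tan (α / 2) ^ 2 * (1 / k ^ 2) := by
  subst hβ hd
  intro k hk j l hjl
  change ‖scatteringMatrix U k j j‖ ^ 2 / ‖scatteringMatrix U k j l‖ ^ 2 = _
  have hcos : Real.cos (α / 2) ≠ 0 :=
    (Real.cos_pos_of_mem_Ioo ⟨by linarith [hα.1], by linarith [hα.2]⟩).ne'
  have hM2 : M * M = 1 := by simpa only [hM.star_eq] using Unitary.star_mul_self_of_mem hMu
  have hrow : r ^ 2 + (n - 1) * t ^ 2 = 1 := by
    simpa using sq_add_card_sub_one_mul_sq_of_mem_unitaryGroup hMu hr ht j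
  obtain ⟨c, hc, hS⟩ := exists_scatteringMatrix_couplingMatrix_pi_eq_smul hM2 hcos hk
  rw [hU, ← couplingMatrix, hS, Matrix.norm_sq_div_norm_sq_smul_smul_one_add_smul M hc _ _ hjl]
  have hdiag : ‖Complex.I * Real.tan (α / 2) + k * M j j‖ ^ 2 =
      k ^ 2 * r ^ 2 + Real.tan (α / 2) ^ 2 := by
    rw [← hr j, ← Complex.conj_eq_iff_re.mp (hM.apply j j), Complex.norm_real, Real.norm_eq_abs,
      sq_abs, show Complex.I * Real.tan (α / 2) + k * (M j j).re =
        ((k * (M j j).re : ℝ) : ℂ) + Real.tan (α / 2) * Complex.I by push_cast; ring,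
      Complex.norm_add_mul_I, Real.sq_sqrt (by positivity)]
    ring
  have hoff : ‖(k : ℂ) * M j l‖ ^ 2 = k ^ 2 * t ^ 2 := by
    rw [norm_mul, ht j l hjl, Complex.norm_real, Real.norm_eq_abs, abs_of_pos hk, mul_pow]
  rw [hdiag, hoff]
  field_simp
  linear_combination -Real.tan (α / 2) ^ 2 * hrow

theorem stmt_16 (n : ℕ) (α β : ℝ)
    (hα : α ∈ Set.Ioo (-π) π) (hα0 : α ≠ 0) (hβ : β = π)
    (M : Matrix (Fin n) (Fin n) ℂ)
    (hM : M.IsHermitian) (hMu : M ∈ Matrix.unitaryGroup (Fin n) ℂ)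
    (hnd : ¬ M.IsDiag)
    (r t : ℝ) (ht0 : 0 < t)
    (hr : ∀ j, norm (M j j) = r)
    (ht : ∀ j l, j ≠ l → norm (M j l) = t)
    (d : ℝ) (hd : d = r / t)
    (U : Matrix (Fin n) (Fin n) ℂ)
    (hU : U = Complex.exp (Complex.I * ((α + β) / 2)) •
        ((Real.cos ((α - β) / 2) : ℂ) • (1 : Matrix (Fin n) (Fin n) ℂ) +
          (Complex.I * (Real.sin ((α - β) / 2) : ℂ)) • M)) :
    ∀ k : ℝ, 0 < k → ∀ j l : Fin n, j ≠ l →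
      norm (((((k : ℂ) - 1) • U + ((k : ℂ) + 1) • (1 : Matrix (Fin n) (Fin n) ℂ))⁻¹ *
            (((k : ℂ) + 1) • U + ((k : ℂ) - 1) • (1 : Matrix (Fin n) (Fin n) ℂ))) j j) ^ 2 /
          norm (((((k : ℂ) - 1) • U + ((k : ℂ) + 1) • (1 : Matrix (Fin n) (Fin n) ℂ))⁻¹ *
            (((k : ℂ) + 1) • U + ((k : ℂ) - 1) • (1 : Matrix (Fin n) (Fin n) ℂ))) j l) ^ 2 =
        d ^ 2 + (d ^ 2 + n - 1) * Real.tan (α / 2) ^ 2 * (1 / k ^ 2) :=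
  stmt_16_general n α β hα hβ M hM hMu r t ht0 hr ht d hd U hU
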